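/- The weighted nuclear norm with nonincreasing weights is computed by soft-thresholding singular values: let X ∈ ℝ^{m×n} with SVD X = U Σ Vᵀ, singular values σ₁ ≥ … ≥ σ_r, and weights 0 ≤ w₁ ≤ … ≤ w_r. Then X̂ = U S_w(Σ) Vᵀ, where S_w(Σ) has diagonal entries max(σ_i − w_i, 0), is a global minimizer of Y ↦ (1/2)‖X − Y‖_F² + ∑_i w_i σ_i(Y). -/

import Mathlib

/-!
Write `Y = Q diag(s) Wᵀ` with partial isometries `Q`, `W` and `s` the sorted singular values
of `Y`. For `X = U diag(σ) Vᵀ` this gives `tr(XᵀY) = ∑ᵢⱼ σᵢ sⱼ Bᵢⱼ Gⱼᵢ` with `B = UᵀQ`,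
`G = WᵀV`. Here `Bᵢⱼ Gⱼᵢ ≤ (Bᵢⱼ² + Gⱼᵢ²)/2`, and by Bessel's inequality the right side is a
doubly substochastic matrix. Against such a matrix a bilinear form in two nonincreasing
nonnegative vectors is at most `∑ σᵢ sᵢ`, which gives von Neumann's trace inequality
`tr(XᵀY) ≤ ∑ σᵢ sᵢ`.
Hence the objective at `Y` is at least `∑ᵢ (½(σᵢ - sᵢ)² + wᵢ sᵢ)`, and each term is minimized
over `sᵢ ≥ 0` by `max(σᵢ - wᵢ, 0)`. Because `w` is nondecreasing these thresholded values are
again sorted, so they are the singular values of `X̂` and the lower bound is attained there.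
-/

open Matrix

/-- Squared Frobenius norm of a real matrix. -/
def fnormSq {m n : ℕ} (M : Matrix (Fin m) (Fin n) ℝ) : ℝ :=
  ∑ i, ∑ j, (M i j) ^ 2

/-- The `i`-th largest singular value of a real `m×n` matrix, obtained by sorting
the square roots of the eigenvalues of `YᵀY` in nonincreasing order. -/
noncomputable def svalDesc {m n : ℕ} (Y : Matrix (Fin m) (Fin n) ℝ) (i : Fin n) : ℝ :=
  let f : Fin n → ℝ :=
    fun j => Real.sqrt ((Matrix.isHermitian_conjTranspose_mul_self Y).eigenvalues j)
  f (Tuple.sort f i.rev)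

open Finset

namespace Matrix

variable {m n k : Type*} [Fintype m]

theorem transpose_mul_self_apply_self (A : Matrix m n ℝ) (j : n) :
    (Aᵀ * A) j j = ∑ i, A i j ^ 2 := by
  simp [mul_apply, sq]

theorem trace_diagonal_mul_mul_diagonal_mul [DecidableEq m] (a b : m → ℝ) (B G : Matrix m m ℝ) :
    trace (diagonal a * B * diagonal b * G) = ∑ i, ∑ j, a i * b j * (B i j * G j i) := by
  refine sum_congr rfl fun i _ => ?_
  rw [diag_apply, mul_apply]
  refine sum_congr rfl fun j _ => ?_
  rw [mul_diagonal, diagonal_mul]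
  ring

theorem IsHermitian.exists_transpose_mul_mul_eq_diagonal [DecidableEq m] {A : Matrix m m ℝ}
    (hA : A.IsHermitian) :
    ∃ W : Matrix m m ℝ, Wᵀ * W = 1 ∧ Wᵀ * A * W = diagonal hA.eigenvalues := by
  refine ⟨hA.eigenvectorUnitary, ?_, ?_⟩
  · have h := hA.eigenvectorUnitary.2
    rwa [mem_unitaryGroup_iff', star_eq_conjTranspose, conjTranspose_eq_transpose_of_trivial] at h
  · have h := hA.conjStarAlgAut_star_eigenvectorUnitary
    rw [Unitary.conjStarAlgAut_star_apply] at h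
    simpa [star_eq_conjTranspose, conjTranspose_eq_transpose_of_trivial] using h

theorem IsHermitian.map_eigenvalues_eq [DecidableEq m] {A W : Matrix m m ℝ} (hA : A.IsHermitian)
    (hW : Wᵀ * W = 1) {d : m → ℝ} (h : A = W * diagonal d * Wᵀ) :
    univ.val.map hA.eigenvalues = univ.val.map d := by
  have hcharpoly : A.charpoly = (diagonal d).charpoly := by
    rw [h, Matrix.mul_assoc, charpoly_mul_comm, Matrix.mul_assoc, hW, Matrix.mul_one]
  have hroots := hA.roots_charpoly_eq_eigenvalues
  rw [hcharpoly, charpoly_diagonal, Polynomial.roots_prod _ _ (prod_ne_zero_iff.2 fun i _ =>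
      Polynomial.X_sub_C_ne_zero (d i))] at hroots
  simpa using hroots.symm

variable [Fintype n]

def IsPartialIsometry (P : Matrix m n ℝ) : Prop := P * Pᵀ * P = P

theorem isPartialIsometry_of_transpose_mul_self_eq_one [DecidableEq n] {P : Matrix m n ℝ}
    (hP : Pᵀ * P = 1) : IsPartialIsometry P := by
  rw [IsPartialIsometry, Matrix.mul_assoc, hP, Matrix.mul_one]

theorem IsPartialIsometry.submatrix_id_equiv {o : Type*} [Fintype o] {P : Matrix m n ℝ}
    (hP : P.IsPartialIsometry) (e : o ≃ n) : (P.submatrix id e).IsPartialIsometry := by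
  rw [IsPartialIsometry, transpose_submatrix, submatrix_mul_equiv,
    ← submatrix_id_id (P * Pᵀ), ← submatrix_mul _ _ _ _ _ Function.bijective_id, submatrix_id_id,
    hP]

theorem IsPartialIsometry.sum_sq_transpose_mul_apply_le {Q : Matrix m n ℝ}
    (hQ : IsPartialIsometry Q) (M : Matrix m k ℝ) (j : k) :
    ∑ i, (Qᵀ * M) i j ^ 2 ≤ ∑ i, M i j ^ 2 := by
  have hQQ : Q * (Qᵀ * (Q * (Qᵀ * M))) = Q * (Qᵀ * M) := by
    rw [← Matrix.mul_assoc Qᵀ, ← Matrix.mul_assoc Q, ← Matrix.mul_assoc Q, hQ]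
  have hR : (M - Q * Qᵀ * M)ᵀ * (M - Q * Qᵀ * M) = Mᵀ * M - (Qᵀ * M)ᵀ * (Qᵀ * M) := by
    simp only [transpose_sub, transpose_mul, transpose_transpose, Matrix.sub_mul, Matrix.mul_sub,
      Matrix.mul_assoc, hQQ]
    abel
  have h := transpose_mul_self_apply_self (M - Q * Qᵀ * M) j
  rw [hR, sub_apply, transpose_mul_self_apply_self, transpose_mul_self_apply_self] at h
  linarith [sum_nonneg fun i (_ : i ∈ univ) => sq_nonneg ((M - Q * Qᵀ * M) i j)]

theorem IsPartialIsometry.sum_sq_apply_le_one {Q : Matrix m n ℝ} (hQ : IsPartialIsometry Q)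
    (j : n) : ∑ i, Q i j ^ 2 ≤ 1 := by
  -- `x = (Qᵀ * Q) j j = ∑ i, Q i j ^ 2` satisfies `x ^ 2 ≤ x` by Bessel's inequality for `M = Q`.
  have hBessel := hQ.sum_sq_transpose_mul_apply_le Q j
  have hdiag : (Qᵀ * Q) j j ^ 2 ≤ ∑ i, (Qᵀ * Q) i j ^ 2 :=
    single_le_sum (fun i _ => sq_nonneg ((Qᵀ * Q) i j)) (mem_univ j)
  rw [transpose_mul_self_apply_self] at hdiag
  nlinarith [sum_nonneg fun i (_ : i ∈ univ) => sq_nonneg (Q i j)]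

theorem IsPartialIsometry.sum_sq_transpose_mul_apply_le_one [Fintype k] {P : Matrix m n ℝ}
    {Q : Matrix m k ℝ} (hP : IsPartialIsometry P) (hQ : IsPartialIsometry Q) (j : k) :
    ∑ i, (Pᵀ * Q) i j ^ 2 ≤ 1 :=
  (hP.sum_sq_transpose_mul_apply_le Q j).trans (hQ.sum_sq_apply_le_one j)

theorem exists_isPartialIsometry_mul_diagonal [DecidableEq n] {M : Matrix m n ℝ} {s : n → ℝ}
    (h : Mᵀ * M = diagonal (fun j => s j ^ 2)) :
    ∃ Q : Matrix m n ℝ, Q.IsPartialIsometry ∧ M = Q * diagonal s := by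
  have hcol : ∀ i j, s j = 0 → M i j = 0 := fun i j hs => by
    have hj := transpose_mul_self_apply_self M j
    rw [h, diagonal_apply_eq, hs] at hj
    have := (sum_eq_zero_iff_of_nonneg fun k _ => sq_nonneg (M k j)).1 (by simpa using hj.symm) i
    simpa using this
  -- Here `0⁻¹ = 0`, harmless because the columns of `M` where `s` vanishes are zero.
  refine ⟨M * diagonal s⁻¹, ?_, ?_⟩
  · have hQ : (M * diagonal s⁻¹)ᵀ * (M * diagonal s⁻¹) = diagonal (fun j => s j * (s j)⁻¹) := by
      rw [transpose_mul, diagonal_transpose, Matrix.mul_assoc, ← Matrix.mul_assoc Mᵀ, h,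
        diagonal_mul_diagonal, diagonal_mul_diagonal]
      congr 1
      ext j
      rcases eq_or_ne (s j) 0 with hs | hs
      · simp [hs]
      · simp only [Pi.inv_apply]; field_simp
    rw [IsPartialIsometry, Matrix.mul_assoc, hQ, Matrix.mul_assoc, diagonal_mul_diagonal]
    congr 2
    ext j
    rcases eq_or_ne (s j) 0 with hs | hs <;> simp [hs]
  · ext i j
    rw [Matrix.mul_assoc, diagonal_mul_diagonal, mul_diagonal]
    rcases eq_or_ne (s j) 0 with hs | hs
    · simp [hcol i j hs]
    · simp [hs]

end Matrix

theorem sum_sum_mul_mul_sub_sum_mul_le {ι : Type*} [Fintype ι] {T : ι → ι → ℝ}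
    (hrow : ∀ i, ∑ j, T i j ≤ 1) (hcol : ∀ j, ∑ i, T i j ≤ 1) {a b : ι → ℝ} {α β : ℝ}
    (hα : 0 ≤ α) (hβ : 0 ≤ β) (ha : ∀ i, α ≤ a i) (hb : ∀ i, β ≤ b i) :
    ∑ i, ∑ j, a i * b j * T i j - ∑ i, a i * b i
      ≤ ∑ i, ∑ j, (a i - α) * (b j - β) * T i j - ∑ i, (a i - α) * (b i - β) := by
  have hmass : ∑ i, ∑ j, T i j ≤ ∑ _i : ι, 1 := sum_le_sum fun i _ => hrow i
  have hbcol : ∑ i, ∑ j, (b j - β) * T i j ≤ ∑ j, (b j - β) := by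
    rw [sum_comm]
    refine sum_le_sum fun j _ => ?_
    rw [← mul_sum]
    exact mul_le_of_le_one_right (sub_nonneg.2 (hb j)) (hcol j)
  have harow : ∑ i, ∑ j, (a i - α) * T i j ≤ ∑ i, (a i - α) := by
    refine sum_le_sum fun i _ => ?_
    rw [← mul_sum]
    exact mul_le_of_le_one_right (sub_nonneg.2 (ha i)) (hrow i)
  have hlhs : ∑ i, ∑ j, a i * b j * T i j = α * β * ∑ i, ∑ j, T i j
      + α * ∑ i, ∑ j, (b j - β) * T i j + β * ∑ i, ∑ j, (a i - α) * T i j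
      + ∑ i, ∑ j, (a i - α) * (b j - β) * T i j := by
    simp only [mul_sum, ← sum_add_distrib]
    exact sum_congr rfl fun i _ => sum_congr rfl fun j _ => by ring
  have hrhs : ∑ i, a i * b i = α * β * ∑ _i : ι, 1 + α * ∑ j, (b j - β) + β * ∑ i, (a i - α)
      + ∑ i, (a i - α) * (b i - β) := by
    simp only [mul_sum, ← sum_add_distrib]
    exact sum_congr rfl fun i _ => by ring
  rw [hlhs, hrhs]
  linarith [mul_le_mul_of_nonneg_left hmass (mul_nonneg hα hβ),
    mul_le_mul_of_nonneg_left hbcol hα, mul_le_mul_of_nonneg_left harow hβ]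

theorem sum_sum_mul_mul_le_sum_mul_of_substochastic {n : ℕ} {a b : Fin n → ℝ}
    (ha : Antitone a) (hb : Antitone b) (ha₀ : ∀ i, 0 ≤ a i) (hb₀ : ∀ i, 0 ≤ b i)
    {T : Fin n → Fin n → ℝ} (hT₀ : ∀ i j, 0 ≤ T i j) (hrow : ∀ i, ∑ j, T i j ≤ 1)
    (hcol : ∀ j, ∑ i, T i j ≤ 1) :
    ∑ i, ∑ j, a i * b j * T i j ≤ ∑ i, a i * b i := by
  induction n with
  | zero => simp
  | succ n ih =>
    -- Lower `a` and `b` by their last (smallest) entries; what is left vanishes at `Fin.last n`.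
    set α := a (Fin.last n)
    set β := b (Fin.last n)
    have hα : ∀ i, α ≤ a i := fun i => ha (Fin.le_last i)
    have hβ : ∀ i, β ≤ b i := fun i => hb (Fin.le_last i)
    have hpeel := sum_sum_mul_mul_sub_sum_mul_le (α := α) (β := β) hrow hcol (ha₀ _) (hb₀ _) hα hβ
    have hrest := ih (a := fun i => a i.castSucc - α) (b := fun j => b j.castSucc - β)
      (T := fun i j => T i.castSucc j.castSucc)
      (fun i j hij => sub_le_sub_right (ha (Fin.castSucc_le_castSucc_iff.2 hij)) _)
      (fun i j hij => sub_le_sub_right (hb (Fin.castSucc_le_castSucc_iff.2 hij)) _)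
      (fun i => sub_nonneg.2 (hα _)) (fun j => sub_nonneg.2 (hβ _)) (fun i j => hT₀ _ _)
      (fun i => le_trans (by simpa [Fin.sum_univ_castSucc] using hT₀ i.castSucc (Fin.last n))
        (hrow i.castSucc))
      (fun j => le_trans (by simpa [Fin.sum_univ_castSucc] using hT₀ (Fin.last n) j.castSucc)
        (hcol j.castSucc))
    have hlhs : ∑ i, ∑ j, (a i - α) * (b j - β) * T i j = ∑ i : Fin n, ∑ j : Fin n,
        (a i.castSucc - α) * (b j.castSucc - β) * T i.castSucc j.castSucc := by
      simp [Fin.sum_univ_castSucc, α, β]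
    have hrhs : ∑ i, (a i - α) * (b i - β)
        = ∑ i : Fin n, (a i.castSucc - α) * (b i.castSucc - β) := by
      simp [Fin.sum_univ_castSucc, α, β]
    linarith

theorem Matrix.IsPartialIsometry.trace_transpose_mul_le_sum_mul {m k : Type*} [Fintype m]
    [Fintype k] {n : ℕ}
    {P₁ P₂ : Matrix m (Fin n) ℝ} {R₁ R₂ : Matrix k (Fin n) ℝ}
    (hP₁ : P₁.IsPartialIsometry) (hP₂ : P₂.IsPartialIsometry)
    (hR₁ : R₁.IsPartialIsometry) (hR₂ : R₂.IsPartialIsometry) {a b : Fin n → ℝ}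
    (ha : Antitone a) (hb : Antitone b) (ha₀ : ∀ i, 0 ≤ a i) (hb₀ : ∀ i, 0 ≤ b i) :
    trace ((P₁ * diagonal a * R₁ᵀ)ᵀ * (P₂ * diagonal b * R₂ᵀ)) ≤ ∑ i, a i * b i := by
  set B := P₁ᵀ * P₂
  set G := R₂ᵀ * R₁
  have hcycle : trace ((P₁ * diagonal a * R₁ᵀ)ᵀ * (P₂ * diagonal b * R₂ᵀ))
      = trace (diagonal a * B * diagonal b * G) := by
    simp only [transpose_mul, transpose_transpose, diagonal_transpose, Matrix.mul_assoc]
    rw [trace_mul_comm R₁]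
    simp only [B, G, Matrix.mul_assoc]
  have hBrow : ∀ i, ∑ j, B i j ^ 2 ≤ 1 := fun i => by
    simpa only [B, ← transpose_apply (P₁ᵀ * P₂), transpose_mul, transpose_transpose]
      using hP₂.sum_sq_transpose_mul_apply_le_one hP₁ i
  have hGcol : ∀ j, ∑ i, G j i ^ 2 ≤ 1 := fun j => by
    simpa only [G, ← transpose_apply (R₂ᵀ * R₁), transpose_mul, transpose_transpose]
      using hR₁.sum_sq_transpose_mul_apply_le_one hR₂ j
  set T : Fin n → Fin n → ℝ := fun i j => (B i j ^ 2 + G j i ^ 2) / 2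
  calc trace ((P₁ * diagonal a * R₁ᵀ)ᵀ * (P₂ * diagonal b * R₂ᵀ))
      = ∑ i, ∑ j, a i * b j * (B i j * G j i) := by
        rw [hcycle, trace_diagonal_mul_mul_diagonal_mul]
    _ ≤ ∑ i, ∑ j, a i * b j * T i j := by
      refine sum_le_sum fun i _ => sum_le_sum fun j _ => ?_
      refine mul_le_mul_of_nonneg_left ?_ (mul_nonneg (ha₀ i) (hb₀ j))
      show B i j * G j i ≤ (B i j ^ 2 + G j i ^ 2) / 2
      linarith [two_mul_le_add_sq (B i j) (G j i)]
    _ ≤ ∑ i, a i * b i := by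
      refine sum_sum_mul_mul_le_sum_mul_of_substochastic ha hb ha₀ hb₀
        (fun i j => by positivity) (fun i => ?_) (fun j => ?_)
      · simp only [T, ← sum_div, sum_add_distrib]
        linarith [hBrow i, hR₂.sum_sq_transpose_mul_apply_le_one hR₁ i]
      · simp only [T, ← sum_div, sum_add_distrib]
        linarith [hP₁.sum_sq_transpose_mul_apply_le_one hP₂ j, hGcol j]

theorem fnormSq_eq_trace {m n : ℕ} (M : Matrix (Fin m) (Fin n) ℝ) :
    fnormSq M = trace (Mᵀ * M) := by
  simp only [fnormSq, trace, diag_apply, transpose_mul_self_apply_self]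
  exact sum_comm

theorem fnormSq_sub {m n : ℕ} (X Y : Matrix (Fin m) (Fin n) ℝ) :
    fnormSq (X - Y) = fnormSq X - 2 * trace (Xᵀ * Y) + fnormSq Y := by
  simp only [fnormSq_eq_trace, transpose_sub, Matrix.sub_mul, Matrix.mul_sub, trace_sub]
  rw [← trace_transpose (Yᵀ * X), transpose_mul, transpose_transpose]
  ring

theorem fnormSq_mul_diagonal_mul {m n : ℕ} {U : Matrix (Fin m) (Fin n) ℝ} (hU : Uᵀ * U = 1)
    {V : Matrix (Fin n) (Fin n) ℝ} (hV : Vᵀ * V = 1) (d : Fin n → ℝ) :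
    fnormSq (U * diagonal d * Vᵀ) = ∑ i, d i ^ 2 := by
  rw [fnormSq_eq_trace]
  simp only [transpose_mul, transpose_transpose, diagonal_transpose, Matrix.mul_assoc]
  rw [← Matrix.mul_assoc Uᵀ, hU, Matrix.one_mul, trace_mul_comm, Matrix.mul_assoc,
    Matrix.mul_assoc, hV, Matrix.mul_one, diagonal_mul_diagonal, trace_diagonal]
  simp [sq]

theorem Antitone.eq_of_map_univ_val_eq {α : Type*} [PartialOrder α] {n : ℕ} {f g : Fin n → α}
    (hf : Antitone f) (hg : Antitone g) (h : univ.val.map f = univ.val.map g) : f = g := by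
  rw [Fin.univ_val_map, Fin.univ_val_map, Multiset.coe_eq_coe] at h
  exact List.ofFn_injective (h.eq_of_sortedGE hf.sortedGE_ofFn hg.sortedGE_ofFn)

section SingularValues

variable {m n : ℕ}

noncomputable def svalUnsorted (Y : Matrix (Fin m) (Fin n) ℝ) (j : Fin n) : ℝ :=
  √((isHermitian_conjTranspose_mul_self Y).eigenvalues j)

noncomputable def svalPerm (Y : Matrix (Fin m) (Fin n) ℝ) : Equiv.Perm (Fin n) :=
  Fin.revPerm.trans (Tuple.sort (svalUnsorted Y))

theorem svalDesc_eq_comp (Y : Matrix (Fin m) (Fin n) ℝ) :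
    svalDesc Y = svalUnsorted Y ∘ svalPerm Y := rfl

theorem svalUnsorted_sq (Y : Matrix (Fin m) (Fin n) ℝ) (j : Fin n) :
    svalUnsorted Y j ^ 2 = (isHermitian_conjTranspose_mul_self Y).eigenvalues j :=
  Real.sq_sqrt ((posSemidef_conjTranspose_mul_self Y).eigenvalues_nonneg j)

theorem svalDesc_nonneg (Y : Matrix (Fin m) (Fin n) ℝ) (i : Fin n) : 0 ≤ svalDesc Y i :=
  Real.sqrt_nonneg _

theorem svalDesc_antitone (Y : Matrix (Fin m) (Fin n) ℝ) : Antitone (svalDesc Y) :=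
  (Tuple.monotone_sort (svalUnsorted Y)).comp_antitone fun _ _ h => Fin.rev_le_rev.2 h

theorem sum_sq_svalDesc (Y : Matrix (Fin m) (Fin n) ℝ) : ∑ i, svalDesc Y i ^ 2 = fnormSq Y := by
  rw [show ∑ i, svalDesc Y i ^ 2 = ∑ j, svalUnsorted Y j ^ 2 from
      Equiv.sum_comp (svalPerm Y) (fun j => svalUnsorted Y j ^ 2),
    fnormSq_eq_trace, ← conjTranspose_eq_transpose_of_trivial,
    (isHermitian_conjTranspose_mul_self Y).trace_eq_sum_eigenvalues]
  simp [svalUnsorted_sq]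

theorem svalDesc_mul_diagonal_mul {U : Matrix (Fin m) (Fin n) ℝ} (hU : Uᵀ * U = 1)
    {V : Matrix (Fin n) (Fin n) ℝ} (hV : Vᵀ * V = 1) {c : Fin n → ℝ} (hc₀ : ∀ i, 0 ≤ c i)
    (hc : Antitone c) : svalDesc (U * diagonal c * Vᵀ) = c := by
  set Z := U * diagonal c * Vᵀ
  have hgram : Zᴴ * Z = V * diagonal (fun i => c i ^ 2) * Vᵀ := by
    simp only [Z, conjTranspose_eq_transpose_of_trivial, transpose_mul, transpose_transpose,
      diagonal_transpose, Matrix.mul_assoc]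
    rw [← Matrix.mul_assoc Uᵀ, hU, Matrix.one_mul, ← Matrix.mul_assoc (diagonal c),
      diagonal_mul_diagonal]
    simp [sq]
  have hmap := (isHermitian_conjTranspose_mul_self Z).map_eigenvalues_eq hV hgram
  refine (svalDesc_antitone Z).eq_of_map_univ_val_eq hc ?_
  calc univ.val.map (svalDesc Z) = univ.val.map (svalUnsorted Z) := by
        rw [svalDesc_eq_comp, Fin.univ_val_map, Fin.univ_val_map, Multiset.coe_eq_coe]
        exact (svalPerm Z).ofFn_comp_perm _
    _ = (univ.val.map (fun i => c i ^ 2)).map Real.sqrt := by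
        rw [← hmap, Multiset.map_map]; rfl
    _ = univ.val.map c := by
        rw [Multiset.map_map]
        exact Multiset.map_congr rfl fun i _ => Real.sqrt_sq (hc₀ i)

theorem exists_svd (Y : Matrix (Fin m) (Fin n) ℝ) :
    ∃ (Q : Matrix (Fin m) (Fin n) ℝ) (W : Matrix (Fin n) (Fin n) ℝ),
      Q.IsPartialIsometry ∧ W.IsPartialIsometry ∧ Y = Q * diagonal (svalDesc Y) * Wᵀ := by
  obtain ⟨W, hW, hdiag⟩ :=
    (isHermitian_conjTranspose_mul_self Y).exists_transpose_mul_mul_eq_diagonal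
  have hgram : (Y * W)ᵀ * (Y * W) = diagonal (fun j => svalUnsorted Y j ^ 2) := by
    rw [transpose_mul, Matrix.mul_assoc, ← Matrix.mul_assoc Yᵀ, ← Matrix.mul_assoc,
      ← conjTranspose_eq_transpose_of_trivial Y, hdiag]
    simp only [svalUnsorted_sq]
  obtain ⟨Q, hQ, hYW⟩ := exists_isPartialIsometry_mul_diagonal hgram
  refine ⟨Q.submatrix id (svalPerm Y), W.submatrix id (svalPerm Y), hQ.submatrix_id_equiv _,
    (isPartialIsometry_of_transpose_mul_self_eq_one hW).submatrix_id_equiv _, ?_⟩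
  rw [svalDesc_eq_comp, ← submatrix_diagonal_equiv, transpose_submatrix, submatrix_mul_equiv,
    submatrix_mul_equiv, submatrix_id_id, ← hYW, Matrix.mul_assoc, mul_eq_one_comm.1 hW,
    Matrix.mul_one]

end SingularValues

theorem isMinOn_soft_threshold (a w : ℝ) :
    IsMinOn (fun x => (1 / 2) * (a - x) ^ 2 + w * x) (Set.Ici 0) (max (a - w) 0) := by
  intro b (hb : 0 ≤ b)
  simp only [Set.mem_ofPred_eq]
  rcases le_total w a with h | h
  · rw [max_eq_left (sub_nonneg.2 h)]
    nlinarith [sq_nonneg (a - b - w)]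
  · rw [max_eq_right (sub_nonpos.2 h)]
    nlinarith [mul_nonneg hb (sub_nonneg.2 h)]

theorem wnnm_soft_thresholding_general {m n : ℕ}
    (X : Matrix (Fin m) (Fin n) ℝ)
    (U : Matrix (Fin m) (Fin n) ℝ) (hU : Uᵀ * U = 1)
    (V : Matrix (Fin n) (Fin n) ℝ) (hV : Vᵀ * V = 1)
    (σ : Fin n → ℝ) (hσpos : ∀ i, 0 ≤ σ i) (hσmono : Antitone σ)
    (hX : X = U * Matrix.diagonal σ * Vᵀ)
    (w : Fin n → ℝ) (hwmono : Monotone w) :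
    let Xhat : Matrix (Fin m) (Fin n) ℝ :=
      U * Matrix.diagonal (fun i => max (σ i - w i) 0) * Vᵀ
    ∀ Y : Matrix (Fin m) (Fin n) ℝ,
      (1 / 2) * fnormSq (X - Xhat) + ∑ i, w i * svalDesc Xhat i
        ≤ (1 / 2) * fnormSq (X - Y) + ∑ i, w i * svalDesc Y i := by
  intro Xhat Y
  subst hX
  set c : Fin n → ℝ := fun i => max (σ i - w i) 0
  set s := svalDesc Y
  have hc : Antitone c := fun i j hij => max_le_max (sub_le_sub (hσmono hij) (hwmono hij)) le_rfl
  have hsXhat : svalDesc Xhat = c := svalDesc_mul_diagonal_mul hU hV (fun i => le_max_right _ _) hc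
  have hresidual : U * diagonal σ * Vᵀ - Xhat = U * diagonal (fun i => σ i - c i) * Vᵀ := by
    rw [← Matrix.sub_mul, ← Matrix.mul_sub, diagonal_sub]
  obtain ⟨Q, W, hQ, hW, hY⟩ := exists_svd Y
  have hvonNeumann : trace ((U * diagonal σ * Vᵀ)ᵀ * Y) ≤ ∑ i, σ i * s i := by
    rw [hY]
    exact (isPartialIsometry_of_transpose_mul_self_eq_one hU).trace_transpose_mul_le_sum_mul
      hQ (isPartialIsometry_of_transpose_mul_self_eq_one hV) hW hσmono (svalDesc_antitone Y)
      hσpos (svalDesc_nonneg Y)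
  calc (1 / 2) * fnormSq (U * diagonal σ * Vᵀ - Xhat) + ∑ i, w i * svalDesc Xhat i
      = ∑ i, ((1 / 2) * (σ i - c i) ^ 2 + w i * c i) := by
        rw [hresidual, fnormSq_mul_diagonal_mul hU hV, hsXhat, mul_sum, ← sum_add_distrib]
    _ ≤ ∑ i, ((1 / 2) * (σ i - s i) ^ 2 + w i * s i) :=
        sum_le_sum fun i _ => isMinOn_soft_threshold (σ i) (w i) (svalDesc_nonneg Y i)
    _ = (1 / 2) * (∑ i, σ i ^ 2 - 2 * ∑ i, σ i * s i + ∑ i, s i ^ 2) + ∑ i, w i * s i := by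
        simp only [mul_sum, ← sum_sub_distrib, ← sum_add_distrib]
        exact sum_congr rfl fun i _ => by ring
    _ ≤ (1 / 2) * fnormSq (U * diagonal σ * Vᵀ - Y) + ∑ i, w i * s i := by
        rw [fnormSq_sub, fnormSq_mul_diagonal_mul hU hV, ← sum_sq_svalDesc]
        linarith

/-- WNNM proximal step (Gu et al. 2014): if `X = U Σ Vᵀ` is an SVD with
nonincreasing singular values `σ` and the weights `w` are nonnegative and
nondecreasing, then `X̂ = U S_w(Σ) Vᵀ` with `S_w(Σ) = diag(max(σᵢ − wᵢ, 0))` is a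
global minimizer of `Y ↦ (1/2)‖X − Y‖_F² + ∑ᵢ wᵢ σᵢ(Y)`. -/
theorem wnnm_soft_thresholding {m n : ℕ} (hmn : n ≤ m)
    (X : Matrix (Fin m) (Fin n) ℝ)
    (U : Matrix (Fin m) (Fin n) ℝ) (hU : Uᵀ * U = 1)
    (V : Matrix (Fin n) (Fin n) ℝ) (hV : Vᵀ * V = 1)
    (σ : Fin n → ℝ) (hσpos : ∀ i, 0 ≤ σ i) (hσmono : Antitone σ)
    (hX : X = U * Matrix.diagonal σ * Vᵀ)
    (w : Fin n → ℝ) (hwpos : ∀ i, 0 ≤ w i) (hwmono : Monotone w) :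
    let Xhat : Matrix (Fin m) (Fin n) ℝ :=
      U * Matrix.diagonal (fun i => max (σ i - w i) 0) * Vᵀ
    ∀ Y : Matrix (Fin m) (Fin n) ℝ,
      (1 / 2) * fnormSq (X - Xhat) + ∑ i, w i * svalDesc Xhat i
        ≤ (1 / 2) * fnormSq (X - Y) + ∑ i, w i * svalDesc Y i :=
  wnnm_soft_thresholding_general X U hU V hV σ hσpos hσmono hX w hwmono
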